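/- Assume X is an n×p matrix with orthonormal columns and the true mean is μ = 0. For k ∈ {1,…,p}, the value λ*_k solving E(k_L(λ)) = k in the expected-size formula E(k_L(λ)) = Σᵢ [1 − Φ(√(2λ)/σ) + Φ(−√(2λ)/σ)] satisfies −√(2λ*_k)/σ = Φ⁻¹(k/(2p)), and the resulting heuristic degrees of freedom equals hdf(k) = k − 2p·Φ⁻¹(k/(2p))·φ(Φ⁻¹(k/(2p))). -/

import Mathlib

open Real MeasureTheory Filter Set

noncomputable def stdPdf (v : ℝ) : ℝ := (Real.sqrt (2 * Real.pi))⁻¹ * Real.exp (-(v ^ 2) / 2)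
noncomputable def stdCdf (v : ℝ) : ℝ := ∫ t in Set.Iic v, stdPdf t
noncomputable def stdQuantile : ℝ → ℝ := Function.invFun stdCdf

/-- Expected subset size of Lagrangian best subset selection under `μ = 0`
and orthonormal predictors. -/
noncomputable def EkL (p : ℕ) (σ lam : ℝ) : ℝ :=
  (p : ℝ) * (1 - stdCdf (Real.sqrt (2 * lam) / σ) + stdCdf (-Real.sqrt (2 * lam) / σ))

/-- Effective degrees of freedom of Lagrangian best subset selection under `μ = 0`. -/
noncomputable def dfL (p : ℕ) (σ lam : ℝ) : ℝ :=
  EkL p σ lam +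
    (Real.sqrt (2 * lam) / σ) *
      ((p : ℝ) * (stdPdf (Real.sqrt (2 * lam) / σ) + stdPdf (-Real.sqrt (2 * lam) / σ)))


/-! Under `μ = 0` both tails of the threshold rule contribute equally, so by the symmetry
`Φ(-x) = 1 - Φ(x)` the defining equation `E(k_L(λ)) = k` reads `2p Φ(-√(2λ)/σ) = k`. Since `Φ` is
strictly increasing, `Φ⁻¹` inverts it, which gives the threshold; substituting it into `df_L`
together with `φ(-x) = φ(x)` gives `hdf(k)`. -/

lemma stdPdf_eq_gaussianPDFReal : stdPdf = ProbabilityTheory.gaussianPDFReal 0 1 := by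
  ext v
  simp [stdPdf, ProbabilityTheory.gaussianPDFReal]

lemma stdPdf_pos (v : ℝ) : 0 < stdPdf v := by
  rw [stdPdf_eq_gaussianPDFReal]
  exact ProbabilityTheory.gaussianPDFReal_pos _ _ _ one_ne_zero

lemma stdPdf_neg (v : ℝ) : stdPdf (-v) = stdPdf v := by
  simp [stdPdf]

lemma integrable_stdPdf : Integrable stdPdf := by
  rw [stdPdf_eq_gaussianPDFReal]
  exact ProbabilityTheory.integrable_gaussianPDFReal _ _

lemma integral_stdPdf : ∫ v, stdPdf v = 1 := by
  rw [stdPdf_eq_gaussianPDFReal]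
  exact ProbabilityTheory.integral_gaussianPDFReal_eq_one _ one_ne_zero

lemma stdCdf_strictMono : StrictMono stdCdf := by
  intro a b hab
  have hdiff : stdCdf b - stdCdf a = ∫ x in a..b, stdPdf x :=
    intervalIntegral.integral_Iic_sub_Iic integrable_stdPdf.integrableOn
      integrable_stdPdf.integrableOn
  have hpos : 0 < ∫ x in a..b, stdPdf x :=
    intervalIntegral.intervalIntegral_pos_of_pos integrable_stdPdf.intervalIntegrable
      stdPdf_pos hab
  linarith

lemma stdCdf_neg (x : ℝ) : stdCdf (-x) = 1 - stdCdf x := by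
  have hreflect : stdCdf (-x) = ∫ t in Ioi x, stdPdf t := by
    simpa only [stdCdf, stdPdf_neg, neg_neg] using integral_comp_neg_Iic (-x) stdPdf
  have hsplit : stdCdf x + ∫ t in Ioi x, stdPdf t = 1 := by
    rw [stdCdf, intervalIntegral.integral_Iic_add_Ioi integrable_stdPdf.integrableOn
      integrable_stdPdf.integrableOn, integral_stdPdf]
  linarith

lemma stdQuantile_stdCdf (x : ℝ) : stdQuantile (stdCdf x) = x :=
  Function.leftInverse_invFun stdCdf_strictMono.injective x

lemma EkL_eq (p : ℕ) (σ lam : ℝ) :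
    EkL p σ lam = 2 * p * stdCdf (-Real.sqrt (2 * lam) / σ) := by
  rw [EkL, neg_div, stdCdf_neg]
  ring

lemma dfL_eq (p : ℕ) (σ lam : ℝ) :
    dfL p σ lam = EkL p σ lam -
      2 * p * (-Real.sqrt (2 * lam) / σ) * stdPdf (-Real.sqrt (2 * lam) / σ) := by
  rw [dfL, neg_div, stdPdf_neg]
  ring

theorem hdf_null_formula_general (p : ℕ) (hp : 0 < p) (σ : ℝ)
    (k : ℕ)
    (lam : ℝ) (hsolve : EkL p σ lam = k) :
    -Real.sqrt (2 * lam) / σ = stdQuantile ((k : ℝ) / (2 * p)) ∧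
    dfL p σ lam =
      (k : ℝ) - 2 * (p : ℝ) * stdQuantile ((k : ℝ) / (2 * p)) *
        stdPdf (stdQuantile ((k : ℝ) / (2 * p))) := by
  have hcdf : stdCdf (-Real.sqrt (2 * lam) / σ) = (k : ℝ) / (2 * p) := by
    rw [EkL_eq] at hsolve
    rw [eq_div_iff (by positivity)]
    linarith
  have hquantile : stdQuantile ((k : ℝ) / (2 * p)) = -Real.sqrt (2 * lam) / σ := by
    rw [← hcdf, stdQuantile_stdCdf]
  refine ⟨hquantile.symm, ?_⟩
  rw [hquantile, dfL_eq, hsolve]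

theorem hdf_null_formula (p : ℕ) (hp : 0 < p) (σ : ℝ) (hσ : 0 < σ)
    (k : ℕ) (hk1 : 1 ≤ k) (hkp : k ≤ p)
    (lam : ℝ) (hlam : 0 ≤ lam) (hsolve : EkL p σ lam = k) :
    -Real.sqrt (2 * lam) / σ = stdQuantile ((k : ℝ) / (2 * p)) ∧
    dfL p σ lam =
      (k : ℝ) - 2 * (p : ℝ) * stdQuantile ((k : ℝ) / (2 * p)) *
        stdPdf (stdQuantile ((k : ℝ) / (2 * p))) :=
  hdf_null_formula_general p hp σ k lam hsolve
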